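/- arXiv:1505.04701 — 2 statements merged into one kernel-verified Lean document; each statement's English description precedes it below -/
import Mathlib

section
/- Let G be a countable group, S = (S_n) a Følner sequence, A ⊆ G with d̄_S(A) ≥ α > 0, and Y a finite nonempty subset of G. Then for every ε > 0 there exist arbitrarily large n such that (1/|S_n|) Σ_{x ∈ S_n} |x(A ∩ S_n)⁻¹ ∩ Y| / |Y| ≥ α − ε − Σ_{y ∈ Y} |y⁻¹S_n △ S_n| / |S_n|. -/
open Filter Pointwise
open scoped symmDiff Classical

variable {G : Type*}

/-- Upper density of `A` along the sequence of finite sets `S`. -/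
noncomputable def upperDens (S : ℕ → Finset G) (A : Set G) : ℝ :=
  limsup (fun n => (((S n).filter (· ∈ A)).card : ℝ) / ((S n).card : ℝ)) atTop

/-- Lower density of `A` along the sequence of finite sets `S`. -/
noncomputable def lowerDens (S : ℕ → Finset G) (A : Set G) : ℝ :=
  liminf (fun n => (((S n).filter (· ∈ A)).card : ℝ) / ((S n).card : ℝ)) atTop

/-- `S` is a (left) Følner sequence for `G`. -/
def IsFolner [Group G] (S : ℕ → Finset G) : Prop :=
  (∀ n, (S n).Nonempty) ∧
  ∀ x : G, Tendsto (fun n => (((x • S n) ∆ S n).card : ℝ) / ((S n).card : ℝ)) atTop (nhds 0)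

/-- (Left) Banach density: supremum of upper densities over all Følner sequences. -/
noncomputable def banachDens [Group G] (A : Set G) : ℝ :=
  sSup {d : ℝ | ∃ S : ℕ → Finset G, IsFolner S ∧ d = upperDens S A}

/-! Double counting the pairs `(x, y) ∈ Sₙ × Y` with `x ∈ y(A ∩ Sₙ)` turns the average of
`|x(A ∩ Sₙ)⁻¹ ∩ Y| / |Y|` over `x ∈ Sₙ` into the average of `|y(A ∩ Sₙ) ∩ Sₙ| / |Sₙ|` over `y ∈ Y`.
Translating by `y⁻¹`, each of these misses at most `|y⁻¹Sₙ ∆ Sₙ|` points of `A ∩ Sₙ`, so the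
average is at least the relative density of `A` in `Sₙ` minus the Følner error terms; that density
exceeds `α - ε` for infinitely many `n`. -/

open Finset

theorem Finset.card_le_card_inter_add_card_symmDiff {α : Type*} [DecidableEq α]
    {C S T : Finset α} (hCS : C ⊆ S) : #C ≤ #(C ∩ T) + #(T ∆ S) := by
  rw [← card_inter_add_card_sdiff C T]
  gcongr
  exact (sdiff_subset_sdiff hCS subset_rfl).trans symmDiff_subset_sdiff'

section Group

variable [Group G]

theorem Finset.mem_smul_finset_inv_iff (C : Finset G) (x y : G) : y ∈ x • C⁻¹ ↔ x ∈ y • C := by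
  simp only [mem_smul_finset, Finset.mem_inv, smul_eq_mul]
  constructor
  · rintro ⟨c, ⟨d, hd, rfl⟩, rfl⟩
    exact ⟨d, hd, by group⟩
  · rintro ⟨c, hc, rfl⟩
    exact ⟨c⁻¹, ⟨c, hc, rfl⟩, by group⟩

theorem Finset.sum_card_smul_inv_inter_eq_sum_card_smul_inter (C X Y : Finset G) :
    ∑ x ∈ X, #((x • C⁻¹) ∩ Y) = ∑ y ∈ Y, #((y • C) ∩ X) := by
  convert sum_card_bipartiteAbove_eq_sum_card_bipartiteBelow (s := X) (t := Y)
    (r := fun x y => x ∈ y • C) using 3 with x _ y _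
  · rw [bipartiteAbove, inter_comm, ← filter_mem_eq_inter]
    simp only [mem_smul_finset_inv_iff]
  · rw [bipartiteBelow, inter_comm, ← filter_mem_eq_inter]

theorem Finset.card_le_card_smul_inter_add_card_symmDiff {C S : Finset G} (hCS : C ⊆ S) (y : G) :
    #C ≤ #((y • C) ∩ S) + #((y⁻¹ • S) ∆ S) := by
  have : #((y • C) ∩ S) = #(C ∩ (y⁻¹ • S)) := by
    rw [← card_smul_finset y⁻¹, smul_finset_inter, inv_smul_smul]
  rw [this]
  exact card_le_card_inter_add_card_symmDiff hCS

theorem Finset.card_div_sub_sum_card_symmDiff_div_le {C S Y : Finset G} (hCS : C ⊆ S)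
    (hY : Y.Nonempty) :
    (#C : ℝ) / #S - ∑ y ∈ Y, (#((y⁻¹ • S) ∆ S) : ℝ) / #S ≤
      (1 / #S) * ∑ x ∈ S, (#((x • C⁻¹) ∩ Y) : ℝ) / #Y := by
  set D : ℝ := ∑ y ∈ Y, (#((y⁻¹ • S) ∆ S) : ℝ)
  have hk : (1 : ℝ) ≤ #Y := by exact_mod_cast hY.card_pos
  have hD : 0 ≤ D := by positivity
  have hcount : (#Y : ℝ) * #C - D ≤ ∑ x ∈ S, (#((x • C⁻¹) ∩ Y) : ℝ) := by
    have := sum_le_sum fun y (_ : y ∈ Y) => (Nat.cast_le (α := ℝ)).2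
      (card_le_card_smul_inter_add_card_symmDiff hCS y)
    push_cast [sum_add_distrib, sum_const, nsmul_eq_mul] at this
    rw [← Nat.cast_sum, sum_card_smul_inv_inter_eq_sum_card_smul_inter, Nat.cast_sum]
    linarith
  calc (#C : ℝ) / #S - ∑ y ∈ Y, (#((y⁻¹ • S) ∆ S) : ℝ) / #S
      = (1 / #S) * (#C - D) := by rw [← sum_div]; ring
    _ ≤ (1 / #S) * (#C - D / #Y) := by gcongr; exact div_le_self hD hk
    _ ≤ (1 / #S) * ((∑ x ∈ S, (#((x • C⁻¹) ∩ Y) : ℝ)) / #Y) := by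
        gcongr
        rw [le_div_iff₀ (by linarith), sub_mul, div_mul_cancel₀ _ (by linarith)]
        linarith
    _ = (1 / #S) * ∑ x ∈ S, (#((x • C⁻¹) ∩ Y) : ℝ) / #Y := by rw [sum_div]

end Group

theorem frequently_lt_card_filter_div_of_lt_upperDens {S : ℕ → Finset G} {A : Set G} {β : ℝ}
    (h : β < upperDens S A) :
    ∃ᶠ n in atTop, β < (((S n).filter (· ∈ A)).card : ℝ) / ((S n).card : ℝ) :=
  frequently_lt_of_lt_limsup (isCoboundedUnder_le_of_le atTop fun _ => by positivity) h

theorem stmt10_general [Group G] (S : ℕ → Finset G) (A : Set G)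
    (α : ℝ) (hA : α ≤ upperDens S A) (Y : Finset G) (hY : Y.Nonempty)
    (ε : ℝ) (hε : 0 < ε) (N : ℕ) :
    ∃ n ≥ N,
      α - ε - ∑ y ∈ Y, (((y⁻¹ • S n) ∆ S n).card : ℝ) / ((S n).card : ℝ) ≤
        (1 / ((S n).card : ℝ)) *
          ∑ x ∈ S n, (((x • ((S n).filter (· ∈ A))⁻¹) ∩ Y).card : ℝ) / (Y.card : ℝ) := by
  obtain ⟨n, hnN, hn⟩ := frequently_atTop.mp
    (frequently_lt_card_filter_div_of_lt_upperDens (show α - ε < upperDens S A by linarith)) N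
  refine ⟨n, hnN, le_trans ?_ (card_div_sub_sum_card_symmDiff_div_le (filter_subset _ _) hY)⟩
  linarith

theorem stmt10 [Group G] [Countable G] (S : ℕ → Finset G) (hS : IsFolner S) (A : Set G)
    (α : ℝ) (hα : 0 < α) (hA : α ≤ upperDens S A) (Y : Finset G) (hY : Y.Nonempty)
    (ε : ℝ) (hε : 0 < ε) (N : ℕ) :
    ∃ n ≥ N,
      α - ε - ∑ y ∈ Y, (((y⁻¹ • S n) ∆ S n).card : ℝ) / ((S n).card : ℝ) ≤
        (1 / ((S n).card : ℝ)) *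
          ∑ x ∈ S n, (((x • ((S n).filter (· ∈ A))⁻¹) ∩ Y).card : ℝ) / (Y.card : ℝ) :=
  stmt10_general S A α hA Y hY ε hε N
end

section
/- Let G be a group, let C, D be finite subsets of G, let γ_0, ..., γ_n ∈ G and s_0, ..., s_n ∈ G be such that for each 1 ≤ j ≤ n, s_j γ_j ∉ {s_0, ..., s_{j-1}} D C. Then the sets s_0 D, s_1(γ_1 C⁻¹ ∩ D), ..., s_n(γ_n C⁻¹ ∩ D) are pairwise disjoint. -/
open Filter Pointwise
open scoped symmDiff Classical

variable {G : Type*}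

namespace Finset

variable [Group G] [DecidableEq G]

/-- If `a d = b c⁻¹` with `d ∈ D`, `c ∈ C`, then `b = a d c ∈ a D C`. -/
theorem disjoint_smul_smul_inv_of_notMem {C D : Finset G} {a b : G} (h : b ∉ a • D * C) :
    Disjoint (a • D) (b • C⁻¹) := by
  rw [disjoint_left]
  rintro _ hx hx'
  obtain ⟨d, hd, rfl⟩ := mem_smul_finset.mp hx
  obtain ⟨c', hc', hdc⟩ := mem_smul_finset.mp hx'
  apply h
  have hb : b = a • d * c'⁻¹ := by rw [← hdc, smul_eq_mul, mul_inv_cancel_right]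
  exact hb ▸ mul_mem_mul (smul_mem_smul_finset hd) (mem_inv'.mp hc')

theorem pairwiseDisjoint_of_subset_smul {C D : Finset G} {n : ℕ} {γ s : ℕ → G}
    {t : ℕ → Finset G} (hD : ∀ j, t j ⊆ s j • D) (hC : ∀ j, 1 ≤ j → t j ⊆ (s j * γ j) • C⁻¹)
    (h : ∀ j, 1 ≤ j → j ≤ n → s j * γ j ∉ image s (range j) * D * C) :
    Set.PairwiseDisjoint (Set.Iic n) t := by
  have hlt : ∀ i j, j ≤ n → i < j → Disjoint (t i) (t j) := by
    intro i j hj hij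
    have hsi : s i • D * C ⊆ image s (range j) * D * C :=
      mul_subset_mul_right <| smul_finset_subset_smul <|
        mem_image_of_mem s (mem_range.mpr hij)
    refine disjoint_of_subset_left (hD i) (disjoint_of_subset_right (hC j (by omega)) ?_)
    exact disjoint_smul_smul_inv_of_notMem fun hmem => h j (by omega) hj (hsi hmem)
  intro i hi j hj hij
  rcases hij.lt_or_gt with hij | hji
  · exact hlt i j hj hij
  · exact (hlt j i hi hji).symm

end Finset

theorem stmt11 [Group G] (C D : Finset G) (n : ℕ) (γ s : ℕ → G)
    (h : ∀ j, 1 ≤ j → j ≤ n →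
      s j * γ j ∉ (Finset.image s (Finset.range j)) * D * C) :
    Set.PairwiseDisjoint (Set.Iic n)
      (fun j => if j = 0 then s 0 • D else s j • ((γ j • C⁻¹) ∩ D)) := by
  refine Finset.pairwiseDisjoint_of_subset_smul (γ := γ) (fun j => ?_) (fun j hj => ?_) h
  · split_ifs with hj
    · rw [hj]
    · exact Finset.smul_finset_subset_smul_finset Finset.inter_subset_right
  · rw [if_neg (by omega), mul_smul]
    exact Finset.smul_finset_subset_smul_finset Finset.inter_subset_left
end
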